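/- Let L be a self-adjoint continuous linear operator on the bipartite Hilbert space H = EuclideanSpace ℂ (Fin m × Fin n). Suppose the unit vectors a ∈ EuclideanSpace ℂ (Fin m) and b ∈ EuclideanSpace ℂ (Fin n) maximize ⟨a'⊗b', L (a'⊗b')⟩ over all pairs of unit vectors (a', b'), and set g = ⟨a⊗b, L (a⊗b)⟩ (a real number). Then the reduced operators satisfy the separability eigenvalue equations in their first form: L_a b = g • b and L_b a = g • a, where L_a : EuclideanSpace ℂ (Fin n) → EuclideanSpace ℂ (Fin n) is determined by ⟨x, L_a y⟩ = ⟨a⊗x, L (a⊗y)⟩ and L_b : EuclideanSpace ℂ (Fin m) → EuclideanSpace ℂ (Fin m) by ⟨x, L_b y⟩ = ⟨x⊗b, L (y⊗b)⟩. Moreover, g is the largest eigenvalue of both L_a and L_b. -/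

import Mathlib

open scoped ComplexInnerProductSpace

/-- The product vector `a ⊗ b` in the bipartite space, `(a ⊗ b)(i, k) = a i * b k`. -/
noncomputable def tp {m n : ℕ} (a : EuclideanSpace ℂ (Fin m)) (b : EuclideanSpace ℂ (Fin n)) :
    EuclideanSpace ℂ (Fin m × Fin n) :=
  WithLp.toLp 2 (fun p : Fin m × Fin n => a p.1 * b p.2)

/-! A unit vector maximizing `re ⟪x, T x⟫` over the unit sphere is, for symmetric `T`, an
eigenvector with the maximal value as eigenvalue (the Lagrange condition for the Rayleigh
quotient), and no eigenvalue can exceed that maximum, since it is the value of the form at a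
normalized eigenvector. Fixing `a`, the form `x ↦ ⟪x, L_a x⟫` is `⟪·, L ·⟫` restricted to the
product vectors `a ⊗ x`, so `L_a` inherits symmetry from `L` and is maximized at `b`; the same
holds for `L_b` with `b` fixed. -/

namespace LinearMap

open RCLike
open scoped InnerProductSpace

variable {𝕜 : Type*} [RCLike 𝕜] {E : Type*} [NormedAddCommGroup E] [InnerProductSpace 𝕜 E]

theorem re_le_of_forall_norm_eq_one_re_inner_le {T : E →ₗ[𝕜] E} {g : ℝ}
    (hbound : ∀ x : E, ‖x‖ = 1 → re ⟪x, T x⟫_𝕜 ≤ g) {μ : 𝕜} {x : E} (hx : x ≠ 0)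
    (hTx : T x = μ • x) : re μ ≤ g := by
  set u : E := (‖x‖ : 𝕜)⁻¹ • x
  have hu : ‖u‖ = 1 := norm_smul_inv_norm hx
  have hTu : T u = μ • u := by rw [map_smul, hTx, smul_comm]
  have hμ : ⟪u, T u⟫_𝕜 = μ := by
    rw [hTu, inner_smul_right, inner_self_eq_norm_sq_to_K, hu]; simp
  simpa [hμ] using hbound u hu

theorem IsSymmetric.of_inner_eq_inner_comp {F : Type*} [NormedAddCommGroup F]
    [InnerProductSpace 𝕜 F] {L : E →ₗ[𝕜] E} (hL : L.IsSymmetric) (f : F → E) {K : F →ₗ[𝕜] F}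
    (hK : ∀ x y, ⟪x, K y⟫_𝕜 = ⟪f x, L (f y)⟫_𝕜) : K.IsSymmetric := by
  intro x y
  rw [← inner_conj_symm, hK, hK, ← hL, inner_conj_symm]

theorem IsSymmetric.apply_eq_smul_of_isMaxOn_re_inner [CompleteSpace E] {T : E →ₗ[𝕜] E}
    (hT : T.IsSymmetric) {v : E} (hv : ‖v‖ = 1)
    {g : ℝ} (hbound : ∀ x : E, ‖x‖ = 1 → re ⟪x, T x⟫_𝕜 ≤ g) (hvg : re ⟪v, T v⟫_𝕜 = g) :
    T v = (g : 𝕜) • v := by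
  have hextr : IsMaxOn hT.toSelfAdjoint.1.reApplyInnerSelf (Metric.sphere 0 ‖v‖) v := by
    intro x hx
    simp only [Set.mem_ofPred_eq, ContinuousLinearMap.reApplyInnerSelf_apply, inner_re_symm]
    exact hvg ▸ hbound x (by simpa [hv] using hx)
  have heig := hT.toSelfAdjoint.2.eq_smul_self_of_isLocalExtrOn (Or.inr hextr.localize)
  rw [ContinuousLinearMap.rayleighQuotient, hv, one_pow, div_one,
    ContinuousLinearMap.reApplyInnerSelf_apply, inner_re_symm] at heig
  exact hvg ▸ heig

end LinearMap

open LinearMap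

theorem see_first_form_general {m n : ℕ}
    (L : EuclideanSpace ℂ (Fin m × Fin n) →L[ℂ] EuclideanSpace ℂ (Fin m × Fin n))
    (hLsa : IsSelfAdjoint L)
    (a : EuclideanSpace ℂ (Fin m)) (b : EuclideanSpace ℂ (Fin n))
    (ha : ‖a‖ = 1) (hb : ‖b‖ = 1)
    (hmax : ∀ (a' : EuclideanSpace ℂ (Fin m)) (b' : EuclideanSpace ℂ (Fin n)),
      ‖a'‖ = 1 → ‖b'‖ = 1 →
      (⟪tp a' b', L (tp a' b')⟫).re ≤ (⟪tp a b, L (tp a b)⟫).re)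
    (g : ℝ) (hg : g = (⟪tp a b, L (tp a b)⟫).re)
    (La : EuclideanSpace ℂ (Fin n) →ₗ[ℂ] EuclideanSpace ℂ (Fin n))
    (hLa : ∀ x y : EuclideanSpace ℂ (Fin n), ⟪x, La y⟫ = ⟪tp a x, L (tp a y)⟫)
    (Lb : EuclideanSpace ℂ (Fin m) →ₗ[ℂ] EuclideanSpace ℂ (Fin m))
    (hLb : ∀ x y : EuclideanSpace ℂ (Fin m), ⟪x, Lb y⟫ = ⟪tp x b, L (tp y b)⟫) :
    La b = (g : ℂ) • b ∧ Lb a = (g : ℂ) • a ∧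
    (∀ (μ : ℂ) (x : EuclideanSpace ℂ (Fin n)), x ≠ 0 → La x = μ • x → μ.re ≤ g) ∧
    (∀ (μ : ℂ) (x : EuclideanSpace ℂ (Fin m)), x ≠ 0 → Lb x = μ • x → μ.re ≤ g) := by
  have hL : (L : EuclideanSpace ℂ (Fin m × Fin n) →ₗ[ℂ] _).IsSymmetric := hLsa.isSymmetric
  have hLa_bound : ∀ x, ‖x‖ = 1 → (⟪x, La x⟫).re ≤ g := fun x hx ↦ by
    rw [hLa, hg]; exact hmax a x ha hx
  have hLb_bound : ∀ x, ‖x‖ = 1 → (⟪x, Lb x⟫).re ≤ g := fun x hx ↦ by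
    rw [hLb, hg]; exact hmax x b hx hb
  refine ⟨?_, ?_, fun μ x hx ↦ re_le_of_forall_norm_eq_one_re_inner_le hLa_bound hx,
    fun μ x hx ↦ re_le_of_forall_norm_eq_one_re_inner_le hLb_bound hx⟩
  · exact (hL.of_inner_eq_inner_comp (tp a) hLa).apply_eq_smul_of_isMaxOn_re_inner hb hLa_bound
      (by rw [hLa, hg]; rfl)
  · exact (hL.of_inner_eq_inner_comp (fun x ↦ tp x b) hLb).apply_eq_smul_of_isMaxOn_re_inner ha
      hLb_bound (by rw [hLb, hg]; rfl)

/-- **First form of the separability eigenvalue equations.**  If the unit vectors `a, b`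
maximize `⟨a'⊗b', L (a'⊗b')⟩` for a self-adjoint operator `L`, `g = ⟨a⊗b, L (a⊗b)⟩`, and
`L_a`, `L_b` are the reduced operators (determined by `⟨x, L_a y⟩ = ⟨a⊗x, L (a⊗y)⟩` and
`⟨x, L_b y⟩ = ⟨x⊗b, L (y⊗b)⟩`), then `L_a b = g • b`, `L_b a = g • a`, and `g` is the
largest eigenvalue of both `L_a` and `L_b`. -/
theorem see_first_form {m n : ℕ} (hm : 1 ≤ m) (hn : 1 ≤ n)
    (L : EuclideanSpace ℂ (Fin m × Fin n) →L[ℂ] EuclideanSpace ℂ (Fin m × Fin n))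
    (hLsa : IsSelfAdjoint L)
    (a : EuclideanSpace ℂ (Fin m)) (b : EuclideanSpace ℂ (Fin n))
    (ha : ‖a‖ = 1) (hb : ‖b‖ = 1)
    (hmax : ∀ (a' : EuclideanSpace ℂ (Fin m)) (b' : EuclideanSpace ℂ (Fin n)),
      ‖a'‖ = 1 → ‖b'‖ = 1 →
      (⟪tp a' b', L (tp a' b')⟫).re ≤ (⟪tp a b, L (tp a b)⟫).re)
    (g : ℝ) (hg : g = (⟪tp a b, L (tp a b)⟫).re)
    (La : EuclideanSpace ℂ (Fin n) →ₗ[ℂ] EuclideanSpace ℂ (Fin n))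
    (hLa : ∀ x y : EuclideanSpace ℂ (Fin n), ⟪x, La y⟫ = ⟪tp a x, L (tp a y)⟫)
    (Lb : EuclideanSpace ℂ (Fin m) →ₗ[ℂ] EuclideanSpace ℂ (Fin m))
    (hLb : ∀ x y : EuclideanSpace ℂ (Fin m), ⟪x, Lb y⟫ = ⟪tp x b, L (tp y b)⟫) :
    La b = (g : ℂ) • b ∧ Lb a = (g : ℂ) • a ∧
    (∀ (μ : ℂ) (x : EuclideanSpace ℂ (Fin n)), x ≠ 0 → La x = μ • x → μ.re ≤ g) ∧
    (∀ (μ : ℂ) (x : EuclideanSpace ℂ (Fin m)), x ≠ 0 → Lb x = μ • x → μ.re ≤ g) :=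
  see_first_form_general L hLsa a b ha hb hmax g hg La hLa Lb hLb
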